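/- arXiv:1503.00239 — 6 statements merged into one kernel-verified Lean document; each statement's English description precedes it below -/
import Mathlib

section
/- Let dim H = d and suppose that ψ together with vectors ψ⊥_1, …, ψ⊥_{d−1} forms an orthonormal basis of H. Then for each sign s ∈ {+1, −1}, the sum of variances satisfies the uncertainty equality ΔA² + ΔB² = s·i⟨[A,B]⟩ + Σ_{k=1}^{d−1} |⟪ψ, (A + s·i·B) ψ⊥_k⟫|². -/
open scoped ComplexInnerProductSpace BigOperators

noncomputable section

variable {H : Type*} [NormedAddCommGroup H] [InnerProductSpace ℂ H]

/-- Expectation value ⟨A⟩ = Re ⟪ψ, A ψ⟫ of an operator in the state ψ. -/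
def expVal (ψ : H) (A : H →ₗ[ℂ] H) : ℝ := (⟪ψ, A ψ⟫).re

/-- Variance ΔA² = ⟨A²⟩ − ⟨A⟩². -/
def varOf (ψ : H) (A : H →ₗ[ℂ] H) : ℝ := (⟪ψ, A (A ψ)⟫).re - (expVal ψ A) ^ 2

/-- The real number i⟨[A,B]⟩. -/
def commRe (ψ : H) (A B : H →ₗ[ℂ] H) : ℝ :=
  (Complex.I * ⟪ψ, (A ∘ₗ B - B ∘ₗ A) ψ⟫).re

/-! Put `T = A + i t B`, so that `T† ψ = φ := A ψ - i t B ψ` and `⟪ψ, T ψ⊥ₖ⟫` is the `k`-th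
coordinate of `φ` in the basis `(ψ, ψ⊥)`. Parseval then splits `‖φ‖² = ⟨A²⟩ + t²⟨B²⟩ - t i⟨[A,B]⟩`
into `|⟪ψ, φ⟫|² = ⟨A⟩² + t²⟨B⟩²` and the sum over `k`; the theorem is the case `t = ±1`. -/

theorem Orthonormal.sum_sq_norm_inner_of_card_eq_finrank {𝕜 E ι : Type*} [RCLike 𝕜]
    [NormedAddCommGroup E] [InnerProductSpace 𝕜 E] [Fintype ι] [Nonempty ι] {v : ι → E}
    (hv : Orthonormal 𝕜 v) (hcard : Fintype.card ι = Module.finrank 𝕜 E) (x : E) :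
    ∑ i, ‖inner 𝕜 (v i) x‖ ^ 2 = ‖x‖ ^ 2 := by
  have hspan := hv.linearIndependent.span_eq_top_of_card_eq_finrank hcard
  simpa using (OrthonormalBasis.mk hv hspan.ge).sum_sq_norm_inner_right x

namespace LinearMap.IsSymmetric

variable {A B : H →ₗ[ℂ] H} (hA : A.IsSymmetric) (hB : B.IsSymmetric) (t : ℝ) (ψ : H)
include hA hB

theorem inner_add_smul_I_apply (x : H) :
    ⟪ψ, (A + ((t : ℂ) * Complex.I) • B) x⟫ = ⟪A ψ - ((t : ℂ) * Complex.I) • B ψ, x⟫ := by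
  simp only [LinearMap.add_apply, LinearMap.smul_apply, inner_add_right, inner_smul_right,
    inner_sub_left, inner_smul_left, map_mul, Complex.conj_ofReal, Complex.conj_I, hA ψ x, hB ψ x]
  ring

theorem norm_sq_sub_smul_I_apply :
    ‖A ψ - ((t : ℂ) * Complex.I) • B ψ‖ ^ 2
      = (⟪ψ, A (A ψ)⟫).re + t ^ 2 * (⟪ψ, B (B ψ)⟫).re - t * commRe ψ A B := by
  have hexpand : ⟪A ψ - ((t : ℂ) * Complex.I) • B ψ, A ψ - ((t : ℂ) * Complex.I) • B ψ⟫
      = ⟪ψ, A (A ψ)⟫ + t ^ 2 * ⟪ψ, B (B ψ)⟫ - t * (Complex.I * ⟪ψ, (A ∘ₗ B - B ∘ₗ A) ψ⟫) := by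
    simp only [inner_sub_left, inner_sub_right, inner_smul_left, inner_smul_right, hA ψ, hB ψ,
      map_mul, Complex.conj_ofReal, Complex.conj_I, LinearMap.sub_apply, LinearMap.comp_apply]
    linear_combination (-(t : ℂ) ^ 2 * ⟪ψ, B (B ψ)⟫) * Complex.I_sq
  rw [← inner_self_eq_norm_sq (𝕜 := ℂ), hexpand, commRe]
  simp [← Complex.ofReal_pow]

theorem norm_sq_inner_sub_smul_I_apply :
    ‖⟪ψ, A ψ - ((t : ℂ) * Complex.I) • B ψ⟫‖ ^ 2 = expVal ψ A ^ 2 + t ^ 2 * expVal ψ B ^ 2 := by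
  rw [inner_sub_right, inner_smul_right, ← hA.coe_re_inner_self_apply,
    ← hB.coe_re_inner_self_apply, Complex.sq_norm, Complex.normSq_apply]
  simp [expVal]
  ring

end LinearMap.IsSymmetric

theorem varOf_add_sq_mul_varOf_eq {A B : H →ₗ[ℂ] H} (hA : A.IsSymmetric) (hB : B.IsSymmetric)
    {d : ℕ} (hd : Module.finrank ℂ H = d + 1) {ψ : H} {ψperp : Fin d → H}
    (horth : Orthonormal ℂ (Fin.cons ψ ψperp : Fin (d + 1) → H)) (t : ℝ) :
    varOf ψ A + t ^ 2 * varOf ψ B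
      = t * commRe ψ A B + ∑ k : Fin d, ‖⟪ψ, (A + ((t : ℂ) * Complex.I) • B) (ψperp k)⟫‖ ^ 2 := by
  set φ := A ψ - ((t : ℂ) * Complex.I) • B ψ
  have hparseval : ‖φ‖ ^ 2 = ‖⟪ψ, φ⟫‖ ^ 2 + ∑ k, ‖⟪ψperp k, φ⟫‖ ^ 2 := by
    rw [← horth.sum_sq_norm_inner_of_card_eq_finrank (by simp [hd]) φ, Fin.sum_univ_succ]
    simp
  have hmatrix (k : Fin d) :
      ‖⟪ψ, (A + ((t : ℂ) * Complex.I) • B) (ψperp k)⟫‖ = ‖⟪ψperp k, φ⟫‖ := by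
    rw [hA.inner_add_smul_I_apply hB, norm_inner_symm]
  rw [hA.norm_sq_sub_smul_I_apply hB, hA.norm_sq_inner_sub_smul_I_apply hB] at hparseval
  simp only [hmatrix, varOf]
  linarith

theorem variance_sum_uncertainty_equality_general
    {H : Type*} [NormedAddCommGroup H] [InnerProductSpace ℂ H]
    (A B : H →ₗ[ℂ] H) (hA : A.IsSymmetric) (hB : B.IsSymmetric)
    (ψ : H)
    (d : ℕ) (hd : Module.finrank ℂ H = d + 1)
    (ψperp : Fin d → H)
    (horth : Orthonormal ℂ (Fin.cons ψ ψperp : Fin (d + 1) → H))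
    (s : ℝ) (hs : s = 1 ∨ s = -1) :
    varOf ψ A + varOf ψ B
      = s * commRe ψ A B
        + ∑ k : Fin d, ‖⟪ψ, (A + ((s : ℂ) * Complex.I) • B) (ψperp k)⟫‖ ^ 2 := by
  have hs2 : s ^ 2 = 1 := by rcases hs with rfl | rfl <;> norm_num
  simpa [hs2] using varOf_add_sq_mul_varOf_eq hA hB hd horth s

theorem variance_sum_uncertainty_equality
    {H : Type*} [NormedAddCommGroup H] [InnerProductSpace ℂ H] [FiniteDimensional ℂ H]
    (A B : H →ₗ[ℂ] H) (hA : A.IsSymmetric) (hB : B.IsSymmetric)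
    (ψ : H) (hψ : ‖ψ‖ = 1)
    (d : ℕ) (hd : Module.finrank ℂ H = d + 1)
    (ψperp : Fin d → H)
    (horth : Orthonormal ℂ (Fin.cons ψ ψperp : Fin (d + 1) → H))
    (s : ℝ) (hs : s = 1 ∨ s = -1) :
    varOf ψ A + varOf ψ B
      = s * commRe ψ A B
        + ∑ k : Fin d, ‖⟪ψ, (A + ((s : ℂ) * Complex.I) • B) (ψperp k)⟫‖ ^ 2 :=
  variance_sum_uncertainty_equality_general A B hA hB ψ d hd ψperp horth s hs
end
end

section
/- Let dim H = d, suppose ΔA > 0 and ΔB > 0, and suppose that ψ together with vectors ψ⊥_1, …, ψ⊥_{d−1} forms an orthonormal basis of H. Then for each sign s ∈ {+1, −1}, the product of standard deviations satisfies the uncertainty equality ΔA · ΔB · (1 − (1/2) Σ_{k=1}^{d−1} |⟪ψ, (A/ΔA + s·i·B/ΔB) ψ⊥_k⟫|²) = s·(i/2)⟨[A,B]⟩. -/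
/-! Write Ă = A − ⟨A⟩ and B̆ = B − ⟨B⟩. On vectors orthogonal to ψ the functional
⟪ψ, (A/ΔA + s i B/ΔB) ·⟫ coincides with ⟪χ, ·⟫ for χ = Ăψ/ΔA − s i B̆ψ/ΔB, and χ is itself
orthogonal to ψ, so by Parseval over the rest of the basis the sum in the theorem is ‖χ‖².
Since ‖Ăψ‖ = ΔA and ‖B̆ψ‖ = ΔB this is 2 + 2s Im⟪Ăψ, B̆ψ⟫/(ΔA ΔB), while
i⟨[A,B]⟩ = i⟨[Ă,B̆]⟩ = −2 Im⟪Ăψ, B̆ψ⟫. -/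

open scoped ComplexInnerProductSpace BigOperators

noncomputable section

variable {H : Type*} [NormedAddCommGroup H] [InnerProductSpace ℂ H]

/-- Standard deviation ΔA = √(ΔA²). -/
def stdDev (ψ : H) (A : H →ₗ[ℂ] H) : ℝ := Real.sqrt (varOf ψ A)

/-- The projection Π = I − |ψ⟩⟨ψ|. -/
def projPerp (ψ : H) : H →ₗ[ℂ] H :=
  LinearMap.id - ((innerSL ℂ ψ).smulRight ψ).toLinearMap

/-- The deviation operator Ă = A − ⟨A⟩I. -/
def devOp (ψ : H) (A : H →ₗ[ℂ] H) : H →ₗ[ℂ] H :=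
  A - (expVal ψ A : ℂ) • LinearMap.id

/-- The operator C = −i[A,B]. -/
def opC (A B : H →ₗ[ℂ] H) : H →ₗ[ℂ] H := (-Complex.I) • (A ∘ₗ B - B ∘ₗ A)

/-- The operator F = ĂB̆ + B̆Ă. -/
def opF (ψ : H) (A B : H →ₗ[ℂ] H) : H →ₗ[ℂ] H :=
  devOp ψ A ∘ₗ devOp ψ B + devOp ψ B ∘ₗ devOp ψ A

section Parseval

variable {𝕜 E ι : Type*} [RCLike 𝕜] [NormedAddCommGroup E] [InnerProductSpace 𝕜 E]

theorem Orthonormal.sum_sq_norm_inner_left_of_card_eq_finrank [Fintype ι] [Nonempty ι]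
    {v : ι → E} (hv : Orthonormal 𝕜 v) (hcard : Fintype.card ι = Module.finrank 𝕜 E) (x : E) :
    ∑ i, ‖inner 𝕜 x (v i)‖ ^ 2 = ‖x‖ ^ 2 := by
  let b := basisOfLinearIndependentOfCardEqFinrank hv.linearIndependent hcard
  have hb : Orthonormal 𝕜 b := by simpa [b] using hv
  have := (b.toOrthonormalBasis hb).sum_sq_norm_inner_left x
  rw [Module.Basis.coe_toOrthonormalBasis] at this
  simpa [b] using this

theorem Orthonormal.sum_sq_norm_inner_tail_of_inner_head_eq_zero {d : ℕ} {ψ x : E}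
    {ψperp : Fin d → E} (horth : Orthonormal 𝕜 (Fin.cons ψ ψperp : Fin (d + 1) → E))
    (hd : Module.finrank 𝕜 E = d + 1) (hx : inner 𝕜 x ψ = 0) :
    ∑ k, ‖inner 𝕜 x (ψperp k)‖ ^ 2 = ‖x‖ ^ 2 := by
  have := horth.sum_sq_norm_inner_left_of_card_eq_finrank (by simp [hd]) x
  simpa [Fin.sum_univ_succ, hx] using this

end Parseval

theorem norm_sq_smul_sub_I_smul (x y : H) (p q : ℝ) :
    ‖(p : ℂ) • x - ((q : ℂ) * Complex.I) • y‖ ^ 2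
      = p ^ 2 * ‖x‖ ^ 2 + q ^ 2 * ‖y‖ ^ 2 + 2 * p * q * (⟪x, y⟫).im := by
  rw [norm_sub_sq (𝕜 := ℂ), norm_smul, norm_smul, inner_smul_left, inner_smul_right]
  simp [mul_pow]
  ring

section Deviation

variable {A B : H →ₗ[ℂ] H} {ψ : H}

theorem devOp_apply (x : H) : devOp ψ A x = A x - (expVal ψ A : ℂ) • x := rfl

theorem ofReal_expVal (hA : A.IsSymmetric) : (expVal ψ A : ℂ) = ⟪ψ, A ψ⟫ :=
  hA.coe_re_inner_self_apply ψ

theorem devOp_isSymmetric (hA : A.IsSymmetric) : (devOp ψ A).IsSymmetric :=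
  hA.sub (LinearMap.IsSymmetric.id.smul (Complex.conj_ofReal _))

theorem inner_devOp_apply_self (hA : A.IsSymmetric) (hψ : ‖ψ‖ = 1) :
    ⟪devOp ψ A ψ, ψ⟫ = 0 := by
  rw [devOp_apply, inner_sub_left, inner_smul_left, Complex.conj_ofReal, ofReal_expVal hA,
    hA, inner_self_eq_norm_sq_to_K, hψ]
  simp

theorem varOf_eq_norm_sq (hA : A.IsSymmetric) (hψ : ‖ψ‖ = 1) :
    varOf ψ A = ‖devOp ψ A ψ‖ ^ 2 := by
  rw [varOf, ← hA ψ (A ψ), devOp_apply, @norm_sub_sq ℂ, inner_smul_right, norm_smul, hψ,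
    hA ψ ψ, ← ofReal_expVal hA, ← inner_self_eq_norm_sq (𝕜 := ℂ)]
  simp
  ring

theorem stdDev_eq_norm (hA : A.IsSymmetric) (hψ : ‖ψ‖ = 1) :
    stdDev ψ A = ‖devOp ψ A ψ‖ := by
  rw [stdDev, varOf_eq_norm_sq hA hψ, Real.sqrt_sq (norm_nonneg _)]

theorem devOp_comp_sub_comp :
    devOp ψ A ∘ₗ devOp ψ B - devOp ψ B ∘ₗ devOp ψ A = A ∘ₗ B - B ∘ₗ A := by
  ext x
  simp [devOp_apply]
  module

theorem commRe_eq_neg_two_mul_im_inner (hA : A.IsSymmetric) (hB : B.IsSymmetric) :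
    commRe ψ A B = -2 * (⟪A ψ, B ψ⟫).im := by
  rw [commRe, LinearMap.sub_apply, inner_sub_right, LinearMap.comp_apply, LinearMap.comp_apply,
    ← hA ψ (B ψ), ← hB ψ (A ψ), ← inner_conj_symm (B ψ) (A ψ)]
  simp only [Complex.mul_re, Complex.I_re, Complex.I_im, Complex.sub_re, Complex.sub_im,
    Complex.conj_im]
  ring

theorem commRe_eq_neg_two_mul_im_inner_devOp (hA : A.IsSymmetric) (hB : B.IsSymmetric) :
    commRe ψ A B = -2 * (⟪devOp ψ A ψ, devOp ψ B ψ⟫).im := by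
  rw [← commRe_eq_neg_two_mul_im_inner (devOp_isSymmetric hA) (devOp_isSymmetric hB), commRe,
    commRe, devOp_comp_sub_comp]

theorem inner_smul_add_I_smul_apply_of_inner_eq_zero (hA : A.IsSymmetric) (hB : B.IsSymmetric)
    {w : H} (hw : ⟪ψ, w⟫ = 0) (p q : ℝ) :
    ⟪ψ, ((p : ℂ) • A + ((q : ℂ) * Complex.I) • B) w⟫
      = ⟪(p : ℂ) • devOp ψ A ψ - ((q : ℂ) * Complex.I) • devOp ψ B ψ, w⟫ := by
  rw [inner_sub_left, inner_smul_left, inner_smul_left, devOp_isSymmetric hA,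
    devOp_isSymmetric hB]
  simp [devOp_apply, inner_sub_right, inner_smul_right_eq_smul, hw]

end Deviation

theorem product_uncertainty_equality_general
    {H : Type*} [NormedAddCommGroup H] [InnerProductSpace ℂ H]
    (A B : H →ₗ[ℂ] H) (hA : A.IsSymmetric) (hB : B.IsSymmetric)
    (ψ : H) (hψ : ‖ψ‖ = 1)
    (hΔA : 0 < stdDev ψ A) (hΔB : 0 < stdDev ψ B)
    (d : ℕ) (hd : Module.finrank ℂ H = d + 1)
    (ψperp : Fin d → H)
    (horth : Orthonormal ℂ (Fin.cons ψ ψperp : Fin (d + 1) → H))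
    (s : ℝ) (hs : s = 1 ∨ s = -1) :
    stdDev ψ A * stdDev ψ B *
        (1 - (1 / 2) * ∑ k : Fin d,
          ‖⟪ψ, (((stdDev ψ A : ℂ))⁻¹ • A
              + ((s : ℂ) * Complex.I * ((stdDev ψ B : ℂ))⁻¹) • B) (ψperp k)⟫‖ ^ 2)
      = s * (commRe ψ A B / 2) := by
  have hs2 : s ^ 2 = 1 := by rcases hs with rfl | rfl <;> norm_num
  have hperp (k : Fin d) : ⟪ψ, ψperp k⟫ = 0 := by
    simpa using horth.2 (Fin.succ_ne_zero k).symm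
  have hop : ((stdDev ψ A : ℂ))⁻¹ • A + ((s : ℂ) * Complex.I * ((stdDev ψ B : ℂ))⁻¹) • B
      = (((stdDev ψ A)⁻¹ : ℝ) : ℂ) • A + (((s * (stdDev ψ B)⁻¹ : ℝ) : ℂ) * Complex.I) • B := by
    push_cast
    ring_nf
  simp only [hop, inner_smul_add_I_smul_apply_of_inner_eq_zero hA hB (hperp _)]
  rw [horth.sum_sq_norm_inner_tail_of_inner_head_eq_zero hd, norm_sq_smul_sub_I_smul,
    commRe_eq_neg_two_mul_im_inner_devOp hA hB, ← stdDev_eq_norm hA hψ, ← stdDev_eq_norm hB hψ]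
  · rw [mul_pow, hs2]
    field_simp
    ring
  · simp [inner_sub_left, inner_smul_left, inner_devOp_apply_self hA hψ,
      inner_devOp_apply_self hB hψ]

theorem product_uncertainty_equality
    {H : Type*} [NormedAddCommGroup H] [InnerProductSpace ℂ H] [FiniteDimensional ℂ H]
    (A B : H →ₗ[ℂ] H) (hA : A.IsSymmetric) (hB : B.IsSymmetric)
    (ψ : H) (hψ : ‖ψ‖ = 1)
    (hΔA : 0 < stdDev ψ A) (hΔB : 0 < stdDev ψ B)
    (d : ℕ) (hd : Module.finrank ℂ H = d + 1)
    (ψperp : Fin d → H)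
    (horth : Orthonormal ℂ (Fin.cons ψ ψperp : Fin (d + 1) → H))
    (s : ℝ) (hs : s = 1 ∨ s = -1) :
    stdDev ψ A * stdDev ψ B *
        (1 - (1 / 2) * ∑ k : Fin d,
          ‖⟪ψ, (((stdDev ψ A : ℂ))⁻¹ • A
              + ((s : ℂ) * Complex.I * ((stdDev ψ B : ℂ))⁻¹) • B) (ψperp k)⟫‖ ^ 2)
      = s * (commRe ψ A B / 2) :=
  product_uncertainty_equality_general A B hA hB ψ hψ hΔA hΔB d hd ψperp horth s hs
end
end

section
/- For every unit vector ψ⊥ ∈ H with ⟪ψ, ψ⊥⟫ = 0 and each sign s ∈ {+1, −1}, the Maccone–Pati sum uncertainty relation holds: ΔA² + ΔB² ≥ s·i⟨[A,B]⟩ + |⟪ψ, (A + s·i·B) ψ⊥⟫|². -/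
open scoped ComplexInnerProductSpace BigOperators

noncomputable section

variable {H : Type*} [NormedAddCommGroup H] [InnerProductSpace ℂ H]

/-!
Put `v = Ăψ - s i B̆ψ`, where `Ă = A - ⟨A⟩` (`devOp`). Since `s² = 1`, expanding the square gives
`‖v‖² = ΔA² + ΔB² - s i⟨[A,B]⟩`. On the other hand, `ψ⊥ ⟂ ψ` makes the shifts by multiples of `ψ`
invisible, so symmetry of `A` and `B` gives `⟪v, ψ⊥⟫ = ⟪ψ, (A + s i B) ψ⊥⟫`, and Cauchy–Schwarz
`|⟪v, ψ⊥⟫| ≤ ‖v‖` concludes.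
-/

theorem norm_sub_real_mul_I_smul_sq {s : ℝ} (hs : s ^ 2 = 1) (x y : H) :
    ‖x - ((s : ℂ) * Complex.I) • y‖ ^ 2 = ‖x‖ ^ 2 + ‖y‖ ^ 2 + 2 * s * ⟪x, y⟫.im := by
  rw [@norm_sub_sq ℂ, norm_smul, inner_smul_right]
  simp only [Complex.norm_mul, Complex.norm_real, Complex.norm_I, mul_one, Real.norm_eq_abs,
    mul_pow, sq_abs, hs, one_mul, RCLike.re_to_complex, Complex.mul_re, Complex.ofReal_re,
    Complex.ofReal_im, Complex.I_re, Complex.I_im, Complex.mul_im]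
  ring

namespace LinearMap.IsSymmetric

variable {A B : H →ₗ[ℂ] H} {ψ : H}

theorem ofReal_expVal (hA : A.IsSymmetric) (ψ : H) : (expVal ψ A : ℂ) = ⟪ψ, A ψ⟫ :=
  hA.coe_re_inner_self_apply ψ

theorem inner_devOp_apply_self (hA : A.IsSymmetric) (hB : B.IsSymmetric) (hψ : ‖ψ‖ = 1) :
    ⟪devOp ψ A ψ, devOp ψ B ψ⟫ = ⟪A ψ, B ψ⟫ - expVal ψ A * expVal ψ B := by
  have hψψ : ⟪ψ, ψ⟫ = (1 : ℂ) := by simp [hψ]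
  have hAψ : ⟪A ψ, ψ⟫ = expVal ψ A := by rw [hA, hA.ofReal_expVal]
  simp only [devOp, LinearMap.sub_apply, LinearMap.smul_apply, LinearMap.id_apply,
    inner_sub_left, inner_sub_right, inner_smul_left, inner_smul_right, Complex.conj_ofReal,
    hψψ, hAψ, ← hB.ofReal_expVal]
  ring

theorem norm_devOp_apply_self_sq (hA : A.IsSymmetric) (hψ : ‖ψ‖ = 1) :
    ‖devOp ψ A ψ‖ ^ 2 = varOf ψ A := by
  rw [← inner_self_eq_norm_sq (𝕜 := ℂ), hA.inner_devOp_apply_self hA hψ, varOf, ← hA ψ,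
    RCLike.re_to_complex, ← Complex.ofReal_mul, Complex.sub_re, Complex.ofReal_re, sq]

theorem commRe_eq_neg_two_mul_im (hA : A.IsSymmetric) (hB : B.IsSymmetric) (ψ : H) :
    commRe ψ A B = -2 * ⟪A ψ, B ψ⟫.im := by
  have hBA : ⟪ψ, B (A ψ)⟫ = starRingEnd ℂ ⟪A ψ, B ψ⟫ := by
    rw [← hB, inner_conj_symm]
  simp only [commRe, LinearMap.sub_apply, LinearMap.comp_apply, inner_sub_right, ← hA ψ, hBA,
    Complex.mul_re, Complex.I_re, Complex.I_im, Complex.sub_im, Complex.conj_im]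
  ring

theorem norm_devOp_sub_real_mul_I_smul_sq (hA : A.IsSymmetric) (hB : B.IsSymmetric)
    (hψ : ‖ψ‖ = 1) {s : ℝ} (hs : s ^ 2 = 1) :
    ‖devOp ψ A ψ - ((s : ℂ) * Complex.I) • devOp ψ B ψ‖ ^ 2
      = varOf ψ A + varOf ψ B - s * commRe ψ A B := by
  rw [norm_sub_real_mul_I_smul_sq hs, hA.norm_devOp_apply_self_sq hψ,
    hB.norm_devOp_apply_self_sq hψ, hA.inner_devOp_apply_self hB hψ,
    hA.commRe_eq_neg_two_mul_im hB, ← Complex.ofReal_mul, Complex.sub_im, Complex.ofReal_im,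
    sub_zero]
  ring

theorem inner_devOp_sub_real_mul_I_smul_of_inner_eq_zero (hA : A.IsSymmetric)
    (hB : B.IsSymmetric) (s : ℝ) {φ : H} (hφ : ⟪ψ, φ⟫ = 0) :
    ⟪devOp ψ A ψ - ((s : ℂ) * Complex.I) • devOp ψ B ψ, φ⟫
      = ⟪ψ, (A + ((s : ℂ) * Complex.I) • B) φ⟫ := by
  simp only [devOp, LinearMap.sub_apply, LinearMap.smul_apply, LinearMap.id_apply,
    LinearMap.add_apply, inner_sub_left, inner_smul_left, inner_add_right, inner_smul_right,
    hφ, hA ψ φ, hB ψ φ, map_mul, Complex.conj_ofReal, Complex.conj_I]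
  ring

end LinearMap.IsSymmetric

theorem maccone_pati_sum_uncertainty_general
    {H : Type*} [NormedAddCommGroup H] [InnerProductSpace ℂ H]
    (A B : H →ₗ[ℂ] H) (hA : A.IsSymmetric) (hB : B.IsSymmetric)
    (ψ : H) (hψ : ‖ψ‖ = 1)
    (ψperp : H) (hperpunit : ‖ψperp‖ = 1) (hperp : ⟪ψ, ψperp⟫ = 0)
    (s : ℝ) (hs : s = 1 ∨ s = -1) :
    varOf ψ A + varOf ψ B
      ≥ s * commRe ψ A B + ‖⟪ψ, (A + ((s : ℂ) * Complex.I) • B) ψperp⟫‖ ^ 2 := by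
  have hs2 : s ^ 2 = 1 := by rcases hs with rfl | rfl <;> norm_num
  set v := devOp ψ A ψ - ((s : ℂ) * Complex.I) • devOp ψ B ψ
  have hbound : ‖⟪ψ, (A + ((s : ℂ) * Complex.I) • B) ψperp⟫‖ ≤ ‖v‖ := by
    rw [← hA.inner_devOp_sub_real_mul_I_smul_of_inner_eq_zero hB s hperp]
    simpa only [hperpunit, mul_one] using norm_inner_le_norm (𝕜 := ℂ) v ψperp
  have hv : ‖v‖ ^ 2 = varOf ψ A + varOf ψ B - s * commRe ψ A B :=
    hA.norm_devOp_sub_real_mul_I_smul_sq hB hψ hs2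
  have := pow_le_pow_left₀ (norm_nonneg _) hbound 2
  linarith

theorem maccone_pati_sum_uncertainty
    {H : Type*} [NormedAddCommGroup H] [InnerProductSpace ℂ H] [FiniteDimensional ℂ H]
    (A B : H →ₗ[ℂ] H) (hA : A.IsSymmetric) (hB : B.IsSymmetric)
    (ψ : H) (hψ : ‖ψ‖ = 1)
    (ψperp : H) (hperpunit : ‖ψperp‖ = 1) (hperp : ⟪ψ, ψperp⟫ = 0)
    (s : ℝ) (hs : s = 1 ∨ s = -1) :
    varOf ψ A + varOf ψ B
      ≥ s * commRe ψ A B + ‖⟪ψ, (A + ((s : ℂ) * Complex.I) • B) ψperp⟫‖ ^ 2 :=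
  maccone_pati_sum_uncertainty_general A B hA hB ψ hψ ψperp hperpunit hperp s hs
end
end

section
/- (Generalized intelligent states.) Let γ ∈ ℂ and suppose ((A − ⟨A⟩I) + i·γ·(B − ⟨B⟩I)) ψ = 0, i.e. ψ satisfies the eigenvalue equation (A + iγB)ψ = (⟨A⟩ + iγ⟨B⟩)ψ. If ΔB > 0, then γ = (⟨C⟩ + i⟨F⟩)/(2ΔB²) and |γ|² = ΔA²/ΔB², where C = −i[A,B] and F = (A − ⟨A⟩I)(B − ⟨B⟩I) + (B − ⟨B⟩I)(A − ⟨A⟩I) are self-adjoint operators. -/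
open scoped ComplexInnerProductSpace BigOperators

noncomputable section

variable {H : Type*} [NormedAddCommGroup H] [InnerProductSpace ℂ H]

/-! Write Ă = A − ⟨A⟩ and B̆ = B − ⟨B⟩. These are self-adjoint with [Ă, B̆] = [A, B], so
⟨C⟩ + i⟨F⟩ = 2i⟪B̆ψ, Ăψ⟫, while ΔA² = ‖Ăψ‖² for a unit vector ψ. The hypothesis says
Ăψ = −iγ B̆ψ, which turns these into 2γ‖B̆ψ‖² and |γ|²‖B̆ψ‖². -/

open Complex ComplexConjugate

lemma LinearMap.IsSymmetric.devOp {A : H →ₗ[ℂ] H} (hA : A.IsSymmetric) (ψ : H) :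
    (devOp ψ A).IsSymmetric :=
  hA.sub (LinearMap.IsSymmetric.id.smul (conj_ofReal _))

lemma varOf_eq_norm_devOp_apply_sq {A : H →ₗ[ℂ] H} (hA : A.IsSymmetric) {ψ : H}
    (hψ : ‖ψ‖ = 1) : varOf ψ A = ‖devOp ψ A ψ‖ ^ 2 := by
  have hAψ : ‖A ψ‖ ^ 2 = (⟪ψ, A (A ψ)⟫).re := by
    rw [← hA, ← inner_self_eq_norm_sq (𝕜 := ℂ)]; rfl
  have hψψ : ‖(expVal ψ A : ℂ) • ψ‖ ^ 2 = expVal ψ A ^ 2 := by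
    rw [norm_smul, hψ, mul_one, norm_real, Real.norm_eq_abs, sq_abs]
  have hcross : (⟪A ψ, (expVal ψ A : ℂ) • ψ⟫).re = expVal ψ A ^ 2 := by
    rw [inner_smul_right, re_ofReal_mul, ← inner_conj_symm, conj_re, sq]; rfl
  simp only [devOp, LinearMap.sub_apply, LinearMap.smul_apply, LinearMap.id_apply]
  rw [norm_sub_sq (𝕜 := ℂ), RCLike.re_to_complex, hAψ, hψψ, hcross, varOf]
  ring

lemma devOp_comp_devOp_sub_devOp_comp_devOp (ψ : H) (A B : H →ₗ[ℂ] H) :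
    devOp ψ A ∘ₗ devOp ψ B - devOp ψ B ∘ₗ devOp ψ A = A ∘ₗ B - B ∘ₗ A := by
  simp only [devOp, LinearMap.sub_comp, LinearMap.comp_sub, LinearMap.smul_comp,
    LinearMap.comp_smul, LinearMap.id_comp, LinearMap.comp_id]
  module

lemma expVal_opC_add_I_mul_expVal_opF {A B : H →ₗ[ℂ] H} (hA : A.IsSymmetric)
    (hB : B.IsSymmetric) (ψ : H) :
    (expVal ψ (opC A B) : ℂ) + I * expVal ψ (opF ψ A B) =
      2 * I * ⟪devOp ψ B ψ, devOp ψ A ψ⟫ := by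
  set z := ⟪devOp ψ B ψ, devOp ψ A ψ⟫
  have hAB : ⟪ψ, devOp ψ A (devOp ψ B ψ)⟫ = conj z := by
    rw [← hA.devOp, inner_conj_symm]
  have hBA : ⟪ψ, devOp ψ B (devOp ψ A ψ)⟫ = z := by
    rw [← hB.devOp]
  have hC : expVal ψ (opC A B) = -2 * z.im := by
    rw [expVal, opC, ← devOp_comp_devOp_sub_devOp_comp_devOp ψ]
    simp only [LinearMap.smul_apply, LinearMap.sub_apply, LinearMap.comp_apply,
      inner_smul_right, inner_sub_right, hAB, hBA]
    simp only [neg_mul, neg_re, mul_re, I_re, I_im, sub_re, sub_im, conj_re, conj_im]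
    ring
  have hF : expVal ψ (opF ψ A B) = 2 * z.re := by
    simp only [expVal, opF, LinearMap.add_apply, LinearMap.comp_apply, inner_add_right, hAB, hBA,
      add_re, conj_re]
    ring
  rw [hC, hF]
  apply Complex.ext <;> simp

theorem generalized_intelligent_state_general
    {H : Type*} [NormedAddCommGroup H] [InnerProductSpace ℂ H]
    (A B : H →ₗ[ℂ] H) (hA : A.IsSymmetric) (hB : B.IsSymmetric)
    (ψ : H) (hψ : ‖ψ‖ = 1)
    (γ : ℂ) (hγ : (devOp ψ A + (Complex.I * γ) • devOp ψ B) ψ = 0)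
    (hΔB : 0 < stdDev ψ B) :
    γ = ((expVal ψ (opC A B) : ℂ) + Complex.I * (expVal ψ (opF ψ A B) : ℂ))
          / (2 * (varOf ψ B : ℂ))
      ∧ ‖γ‖ ^ 2 = varOf ψ A / varOf ψ B := by
  have hV : devOp ψ A ψ = -(I * γ) • devOp ψ B ψ :=
    eq_neg_of_add_eq_zero_left (by simpa using hγ) |>.trans (neg_smul _ _).symm
  have hW : 0 < ‖devOp ψ B ψ‖ ^ 2 := varOf_eq_norm_devOp_apply_sq hB hψ ▸ Real.sqrt_pos.mp hΔB
  rw [varOf_eq_norm_devOp_apply_sq hA hψ, varOf_eq_norm_devOp_apply_sq hB hψ]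
  constructor
  · have hW' : (2 * ‖devOp ψ B ψ‖ ^ 2 : ℂ) ≠ 0 := by exact_mod_cast (mul_pos two_pos hW).ne'
    rw [expVal_opC_add_I_mul_expVal_opF hA hB, hV, inner_smul_right, inner_self_eq_norm_sq_to_K]
    push_cast
    rw [eq_div_iff hW']
    linear_combination (2 * γ * ‖devOp ψ B ψ‖ ^ 2 : ℂ) * I_sq
  · rw [hV, norm_smul, norm_neg, norm_mul, norm_I, one_mul, mul_pow,
      mul_div_cancel_right₀ _ hW.ne']

theorem generalized_intelligent_state
    {H : Type*} [NormedAddCommGroup H] [InnerProductSpace ℂ H] [FiniteDimensional ℂ H]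
    (A B : H →ₗ[ℂ] H) (hA : A.IsSymmetric) (hB : B.IsSymmetric)
    (ψ : H) (hψ : ‖ψ‖ = 1)
    (γ : ℂ) (hγ : (devOp ψ A + (Complex.I * γ) • devOp ψ B) ψ = 0)
    (hΔB : 0 < stdDev ψ B) :
    γ = ((expVal ψ (opC A B) : ℂ) + Complex.I * (expVal ψ (opF ψ A B) : ℂ))
          / (2 * (varOf ψ B : ℂ))
      ∧ ‖γ‖ ^ 2 = varOf ψ A / varOf ψ B :=
  generalized_intelligent_state_general A B hA hB ψ hψ γ hγ hΔB
end
end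

section
/- (Robertson relation for a qubit in Bloch form.) For all unit vectors a, b ∈ ℝ³ and every r ∈ ℝ³ with ‖r‖ ≤ 1, one has √(1 − (a·r)²) · √(1 − (b·r)²) ≥ |(a × b)·r|. -/
/-!
The square of the triple product `(a × b) · r` is the Gram determinant of `a, b, r`. For unit
vectors `a, b` this gives
`(1 - (a·r)²)(1 - (b·r)²) - ((a × b)·r)² = (1 - ‖r‖²)(1 - (a·b)²) + (a·b - (a·r)(b·r))²`,
which is nonnegative by `‖r‖ ≤ 1` and Cauchy–Schwarz; taking square roots gives the claim.
-/

noncomputable section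

/-- Euclidean dot product on ℝ³. -/
def dot3 (a b : Fin 3 → ℝ) : ℝ := a 0 * b 0 + a 1 * b 1 + a 2 * b 2

/-- Euclidean norm on ℝ³. -/
def norm3 (a : Fin 3 → ℝ) : ℝ := Real.sqrt (dot3 a a)

/-- Cross product on ℝ³. -/
def cross3 (a b : Fin 3 → ℝ) : Fin 3 → ℝ :=
  ![a 1 * b 2 - a 2 * b 1, a 2 * b 0 - a 0 * b 2, a 0 * b 1 - a 1 * b 0]

lemma dot3_self_nonneg (a : Fin 3 → ℝ) : 0 ≤ dot3 a a := by
  unfold dot3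
  nlinarith [mul_self_nonneg (a 0), mul_self_nonneg (a 1), mul_self_nonneg (a 2)]

lemma norm3_sq (a : Fin 3 → ℝ) : norm3 a ^ 2 = dot3 a a :=
  Real.sq_sqrt (dot3_self_nonneg a)

lemma dot3_self_eq_one_of_norm3_eq_one {a : Fin 3 → ℝ} (ha : norm3 a = 1) : dot3 a a = 1 := by
  rw [← norm3_sq, ha, one_pow]

lemma dot3_self_le_one_of_norm3_le_one {a : Fin 3 → ℝ} (ha : norm3 a ≤ 1) : dot3 a a ≤ 1 := by
  rw [← norm3_sq]
  exact pow_le_one₀ (Real.sqrt_nonneg _) ha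

lemma dot3_sq_le_mul (a b : Fin 3 → ℝ) : dot3 a b ^ 2 ≤ dot3 a a * dot3 b b := by
  unfold dot3
  nlinarith [sq_nonneg (a 0 * b 1 - a 1 * b 0), sq_nonneg (a 0 * b 2 - a 2 * b 0),
    sq_nonneg (a 1 * b 2 - a 2 * b 1)]

lemma dot3_cross3_sq (a b r : Fin 3 → ℝ) :
    dot3 (cross3 a b) r ^ 2 =
      dot3 a a * dot3 b b * dot3 r r + 2 * dot3 a b * dot3 b r * dot3 a r
        - dot3 a a * dot3 b r ^ 2 - dot3 b b * dot3 a r ^ 2 - dot3 r r * dot3 a b ^ 2 := by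
  simp only [dot3, cross3, Matrix.cons_val_zero, Matrix.cons_val_one, Matrix.cons_val_two,
    Matrix.head_cons, Matrix.tail_cons]
  ring

lemma dot3_cross3_sq_le {a b r : Fin 3 → ℝ} (ha : dot3 a a = 1) (hb : dot3 b b = 1)
    (hr : dot3 r r ≤ 1) :
    dot3 (cross3 a b) r ^ 2 ≤ (1 - dot3 a r ^ 2) * (1 - dot3 b r ^ 2) := by
  have hab : dot3 a b ^ 2 ≤ 1 := by simpa [ha, hb] using dot3_sq_le_mul a b
  have hgap : (1 - dot3 a r ^ 2) * (1 - dot3 b r ^ 2) - dot3 (cross3 a b) r ^ 2 =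
      (1 - dot3 r r) * (1 - dot3 a b ^ 2) + (dot3 a b - dot3 a r * dot3 b r) ^ 2 := by
    rw [dot3_cross3_sq, ha, hb]
    ring
  linarith [mul_nonneg (sub_nonneg.2 hr) (sub_nonneg.2 hab),
    sq_nonneg (dot3 a b - dot3 a r * dot3 b r)]

theorem robertson_qubit_bloch (a b r : Fin 3 → ℝ)
    (ha : norm3 a = 1) (hb : norm3 b = 1) (hr : norm3 r ≤ 1) :
    Real.sqrt (1 - dot3 a r ^ 2) * Real.sqrt (1 - dot3 b r ^ 2)
      ≥ |dot3 (cross3 a b) r| := by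
  have ha' := dot3_self_eq_one_of_norm3_eq_one ha
  have hb' := dot3_self_eq_one_of_norm3_eq_one hb
  have hr' := dot3_self_le_one_of_norm3_le_one hr
  have har : 0 ≤ 1 - dot3 a r ^ 2 := by
    have := dot3_sq_le_mul a r
    rw [ha', one_mul] at this
    linarith
  calc |dot3 (cross3 a b) r| = Real.sqrt (dot3 (cross3 a b) r ^ 2) :=
        (Real.sqrt_sq_eq_abs _).symm
    _ ≤ Real.sqrt ((1 - dot3 a r ^ 2) * (1 - dot3 b r ^ 2)) :=
        Real.sqrt_le_sqrt (dot3_cross3_sq_le ha' hb' hr')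
    _ = Real.sqrt (1 - dot3 a r ^ 2) * Real.sqrt (1 - dot3 b r ^ 2) := Real.sqrt_mul har _
end
end

section
/- (State-independent qubit bound.) For all unit vectors a, b ∈ ℝ³ and every r ∈ ℝ³ with ‖r‖ ≤ 1, one has (a·r)² + (b·r)² ≤ 1 + |a·b|; equivalently, the Bloch-sphere variance sum [1 − (a·r)²] + [1 − (b·r)²] is at least 1 − |a·b|. -/
/-!
The Gram determinant of `a, b, r` is nonnegative; for unit `a, b` with `c = ⟪a, b⟫` it reads
`x² + y² - 2cxy ≤ (1 - c²) ‖r‖²` with `x = ⟪a, r⟫`, `y = ⟪b, r⟫`. The quadratic form on the left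
has eigenvalues `1 ± |c|`, so it dominates `(1 - |c|)(x² + y²)`, and dividing by `1 - |c|` gives
`x² + y² ≤ 1 + |c|`. When `|c| = 1`, Cauchy–Schwarz alone gives `x² + y² ≤ 2`.
-/

noncomputable section

open RealInnerProductSpace

section InnerProductSpace

variable {E : Type*} [NormedAddCommGroup E] [InnerProductSpace ℝ E]

theorem gram_det_three_nonneg (a b r : E) :
    0 ≤ ‖a‖ ^ 2 * ‖b‖ ^ 2 * ‖r‖ ^ 2 + 2 * ⟪a, b⟫ * ⟪a, r⟫ * ⟪b, r⟫
      - ‖a‖ ^ 2 * ⟪b, r⟫ ^ 2 - ‖b‖ ^ 2 * ⟪a, r⟫ ^ 2 - ‖r‖ ^ 2 * ⟪a, b⟫ ^ 2 := by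
  have h := (Matrix.posSemidef_gram ℝ ![a, b, r]).det_nonneg
  simp only [Matrix.det_fin_three, Matrix.gram_apply, Matrix.cons_val_zero, Matrix.cons_val_one,
    Matrix.cons_val_two, Matrix.head_cons, Matrix.tail_cons, real_inner_self_eq_norm_sq] at h
  rw [real_inner_comm a b, real_inner_comm a r, real_inner_comm b r] at h
  linarith

theorem inner_sq_add_inner_sq_le_one_add_abs_inner {a b r : E}
    (ha : ‖a‖ = 1) (hb : ‖b‖ = 1) (hr : ‖r‖ ≤ 1) :
    ⟪a, r⟫ ^ 2 + ⟪b, r⟫ ^ 2 ≤ 1 + |⟪a, b⟫| := by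
  set c := ⟪a, b⟫
  set x := ⟪a, r⟫
  set y := ⟪b, r⟫
  have hc : |c| ≤ 1 := by simpa [ha, hb] using abs_real_inner_le_norm a b
  have hx : x ^ 2 ≤ 1 :=
    (sq_le_one_iff_abs_le_one x).2 <| (abs_real_inner_le_norm a r).trans (by rwa [ha, one_mul])
  have hy : y ^ 2 ≤ 1 :=
    (sq_le_one_iff_abs_le_one y).2 <| (abs_real_inner_le_norm b r).trans (by rwa [hb, one_mul])
  have gram : x ^ 2 + y ^ 2 - 2 * c * x * y ≤ (1 - c ^ 2) * ‖r‖ ^ 2 := by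
    have := gram_det_three_nonneg a b r
    rw [ha, hb] at this
    linarith
  have form_ge : (1 - |c|) * (x ^ 2 + y ^ 2) ≤ x ^ 2 + y ^ 2 - 2 * c * x * y := by
    have hxy : 2 * (|x| * |y|) ≤ x ^ 2 + y ^ 2 := by
      rw [← sq_abs x, ← sq_abs y, ← mul_assoc]; exact two_mul_le_add_sq _ _
    have hcxy := le_abs_self (c * (x * y))
    rw [abs_mul, abs_mul] at hcxy
    nlinarith [abs_nonneg c]
  rcases hc.lt_or_eq with hc | hc
  · have : (1 - |c|) * (x ^ 2 + y ^ 2) ≤ (1 - |c|) * (1 + |c|) :=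
      calc (1 - |c|) * (x ^ 2 + y ^ 2) ≤ (1 - c ^ 2) * ‖r‖ ^ 2 := form_ge.trans gram
        _ ≤ 1 - c ^ 2 :=
          mul_le_of_le_one_right (sub_nonneg.2 ((sq_le_one_iff_abs_le_one c).2 hc.le))
            (pow_le_one₀ (norm_nonneg r) hr)
        _ = (1 - |c|) * (1 + |c|) := by rw [← sq_abs c]; ring
    exact le_of_mul_le_mul_left this (by linarith)
  · linarith

end InnerProductSpace

theorem dot3_eq_inner (a b : Fin 3 → ℝ) :
    dot3 a b = ⟪WithLp.toLp 2 a, WithLp.toLp 2 b⟫ := by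
  rw [EuclideanSpace.inner_toLp_toLp, dotProduct, Fin.sum_univ_three, dot3]
  simp only [star_trivial]
  ring

theorem norm3_eq_norm (a : Fin 3 → ℝ) : norm3 a = ‖WithLp.toLp 2 a‖ := by
  rw [norm3, norm_eq_sqrt_real_inner, dot3_eq_inner]

theorem state_independent_qubit_bound (a b r : Fin 3 → ℝ)
    (ha : norm3 a = 1) (hb : norm3 b = 1) (hr : norm3 r ≤ 1) :
    dot3 a r ^ 2 + dot3 b r ^ 2 ≤ 1 + |dot3 a b|
      ∧ (1 - dot3 a r ^ 2) + (1 - dot3 b r ^ 2) ≥ 1 - |dot3 a b| := by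
  rw [norm3_eq_norm] at ha hb hr
  have key := inner_sq_add_inner_sq_le_one_add_abs_inner ha hb hr
  simp only [← dot3_eq_inner] at key
  exact ⟨key, by linarith⟩
end
end
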